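/- Suppose μ is symmetric. Then for every x ∈ [0,1]: (i) for all n ∈ ℕ₀, p_{2n+1}(x) = Σ_{k=0}^n p_{2k+1} q_{2n−2k}(x) − Σ_{k=1}^n p_{2k} p_{2n−2k+1}(x) − p_{2n+1}(1−x); (ii) for all n ∈ ℕ with n ≥ 1, p_{2n}(x) = Σ_{k=0}^{n−1} p_{2k+1} q_{2n−2k−1}(x) − Σ_{k=1}^n p_{2k} p_{2n−2k}(x) + p_{2n}(1−x). Here p_j := p_j(1), and a sum over an empty index range is 0. -/

import Mathlib

/-!
Both μ and Lebesgue measure, restricted to [0,1], are invariant under t ↦ 1 - t. So if F is the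
primitive of f from 0, then t ↦ f (1 - t) integrates over [0,x] to F 1 - F (1 - x). Integrating
identity (ii) for n against μ yields (i) for n, and integrating (i) for n against Lebesgue measure
yields (ii) for n + 1: the sums integrate term by term by the recursions for p and q, and the
reflected term produces p_{m+1}(1) - p_{m+1}(1 - x), whose constant is the new top term of one of
the sums. The induction starts from (ii) for n = 0, i.e. p_0(x) = p_0(1 - x). Integrability comes
from all p_n, q_n being monotone and nonnegative on [0,1].
-/

open MeasureTheory Set

def IsSymmetricOnUnitInterval (ν : Measure ℝ) : Prop :=
  ∀ x ∈ Icc (0:ℝ) 1, ν (Icc 0 x) = ν (Icc (1 - x) 1)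

theorem isSymmetricOnUnitInterval_volume : IsSymmetricOnUnitInterval volume := fun x _ => by
  rw [Real.volume_Icc, Real.volume_Icc, sub_sub_cancel, sub_zero]

theorem setIntegral_Icc_eq_sub {ν : Measure ℝ} [NullSingletonClass ν] {f : ℝ → ℝ}
    {a b c : ℝ} (hab : a ≤ b) (hbc : b ≤ c) (hf : IntegrableOn f (Icc a c) ν) :
    ∫ t in Icc b c, f t ∂ν = ∫ t in Icc a c, f t ∂ν - ∫ t in Icc a b, f t ∂ν := by
  have hdisj : Disjoint (Icc a b) (Ioc b c) :=
    disjoint_left.2 fun _ h₁ h₂ => (not_lt.2 h₁.2) h₂.1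
  rw [← Icc_union_Ioc_eq_Icc hab hbc] at hf ⊢
  rw [setIntegral_union hdisj measurableSet_Ioc (hf.mono_set subset_union_left)
    (hf.mono_set subset_union_right), integral_Icc_eq_integral_Ioc, add_sub_cancel_left]

section Reflection

variable {ν : Measure ℝ} [IsFiniteMeasureOnCompacts ν]

theorem map_one_sub_restrict_Icc (hsym : IsSymmetricOnUnitInterval ν) :
    (ν.restrict (Icc 0 1)).map (fun t => 1 - t) = ν.restrict (Icc 0 1) := by
  have : IsFiniteMeasure (ν.restrict (Icc 0 1)) :=
    isFiniteMeasure_restrict.2 measure_Icc_lt_top.ne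
  refine (Measure.ext_of_Iic _ _ fun a => ?_).symm
  rw [eq_comm, Measure.map_apply (by fun_prop) measurableSet_Iic,
    show (fun t : ℝ => 1 - t) ⁻¹' Iic a = Ici (1 - a) by ext; grind,
    Measure.restrict_apply measurableSet_Ici, Measure.restrict_apply measurableSet_Iic]
  rcases lt_or_ge a 0 with ha | ha
  · rw [show Ici (1 - a) ∩ Icc 0 1 = ∅ by ext; grind,
      show Iic a ∩ Icc 0 1 = ∅ by ext; grind]
  rcases le_or_gt a 1 with ha' | ha'
  · rw [show Ici (1 - a) ∩ Icc 0 1 = Icc (1 - a) 1 by ext; grind,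
      show Iic a ∩ Icc 0 1 = Icc 0 a by ext; grind, hsym a ⟨ha, ha'⟩]
  · rw [show Ici (1 - a) ∩ Icc 0 1 = Icc 0 1 by ext; grind,
      show Iic a ∩ Icc 0 1 = Icc 0 1 by ext; grind]

theorem measurePreserving_one_sub_restrict_Icc (hsym : IsSymmetricOnUnitInterval ν) :
    MeasurePreserving (fun t : ℝ => 1 - t) (ν.restrict (Icc 0 1)) (ν.restrict (Icc 0 1)) :=
  ⟨by fun_prop, map_one_sub_restrict_Icc hsym⟩

theorem integrableOn_comp_one_sub (hsym : IsSymmetricOnUnitInterval ν) {f : ℝ → ℝ}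
    (hf : IntegrableOn f (Icc 0 1) ν) : IntegrableOn (fun t => f (1 - t)) (Icc 0 1) ν :=
  ((measurePreserving_one_sub_restrict_Icc hsym).integrable_comp_emb
    (measurableEmbedding_subLeft 1)).2 hf

theorem setIntegral_Icc_comp_one_sub [NullSingletonClass ν]
    (hsym : IsSymmetricOnUnitInterval ν) {f : ℝ → ℝ}
    (hf : IntegrableOn f (Icc 0 1) ν) {x : ℝ} (hx : x ∈ Icc (0:ℝ) 1) :
    ∫ t in Icc 0 x, f (1 - t) ∂ν =
      ∫ t in Icc 0 1, f t ∂ν - ∫ t in Icc 0 (1 - x), f t ∂ν := by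
  have hpre : (fun t : ℝ => 1 - t) ⁻¹' Icc (1 - x) 1 = Icc 0 x := by ext; grind
  calc ∫ t in Icc 0 x, f (1 - t) ∂ν
      = ∫ t in Icc 0 x, f (1 - t) ∂ν.restrict (Icc 0 1) := by
        rw [Measure.restrict_restrict_of_subset (Icc_subset_Icc_right hx.2)]
    _ = ∫ t in Icc (1 - x) 1, f t ∂ν.restrict (Icc 0 1) := by
        rw [← hpre]
        exact (measurePreserving_one_sub_restrict_Icc hsym).setIntegral_preimage_emb
          (measurableEmbedding_subLeft 1) f _
    _ = _ := by
        rw [Measure.restrict_restrict_of_subset (Icc_subset_Icc_left (by linarith [hx.2])),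
          setIntegral_Icc_eq_sub (by linarith [hx.2]) (by linarith [hx.1]) hf]

end Reflection

def IsPrimitiveOnUnitInterval (ν : Measure ℝ) (F G : ℝ → ℝ) : Prop :=
  ∀ x ∈ Icc (0:ℝ) 1, G x = ∫ t in Icc 0 x, F t ∂ν

theorem isPrimitiveOnUnitInterval_volume {F G : ℝ → ℝ}
    (h : ∀ x, G x = ∫ t in (0:ℝ)..x, F t) :
    IsPrimitiveOnUnitInterval volume F G := fun x hx => by
  rw [h, intervalIntegral.integral_of_le hx.1, integral_Icc_eq_integral_Ioc]

namespace IsPrimitiveOnUnitInterval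

variable {ν : Measure ℝ} {F G : ℝ → ℝ}

theorem monotoneOn [IsFiniteMeasureOnCompacts ν] (hFG : IsPrimitiveOnUnitInterval ν F G)
    (hF : MonotoneOn F (Icc 0 1)) (hF0 : 0 ≤ F 0) : MonotoneOn G (Icc 0 1) ∧ 0 ≤ G 0 := by
  have hnonneg : ∀ t ∈ Icc (0:ℝ) 1, 0 ≤ F t := fun t ht =>
    hF0.trans (hF ⟨le_rfl, zero_le_one⟩ ht ht.1)
  refine ⟨fun x hx y hy hxy => ?_, ?_⟩
  · rw [hFG x hx, hFG y hy]
    refine setIntegral_mono_set ((hF.integrableOn_isCompact isCompact_Icc).mono_set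
      (Icc_subset_Icc_right hy.2)) ?_ (Icc_subset_Icc_right hxy).eventuallyLE
    filter_upwards [ae_restrict_mem measurableSet_Icc] with t ht
    exact hnonneg t ⟨ht.1, ht.2.trans hy.2⟩
  · rw [hFG 0 ⟨le_rfl, zero_le_one⟩]
    exact setIntegral_nonneg measurableSet_Icc fun t ht =>
      hnonneg t ⟨ht.1, ht.2.trans zero_le_one⟩

theorem sub {F₁ F₂ G₁ G₂ : ℝ → ℝ} (h₁ : IsPrimitiveOnUnitInterval ν F₁ G₁)
    (h₂ : IsPrimitiveOnUnitInterval ν F₂ G₂) (hF₁ : IntegrableOn F₁ (Icc 0 1) ν)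
    (hF₂ : IntegrableOn F₂ (Icc 0 1) ν) :
    IsPrimitiveOnUnitInterval ν (fun t => F₁ t - F₂ t) (fun x => G₁ x - G₂ x) :=
    fun x hx => by
  dsimp only
  rw [h₁ x hx, h₂ x hx, integral_sub (hF₁.mono_set (Icc_subset_Icc_right hx.2))
    (hF₂.mono_set (Icc_subset_Icc_right hx.2))]

theorem finsetSum_const_mul {ι : Type*} (s : Finset ι) (c : ι → ℝ) {F G : ι → ℝ → ℝ}
    (h : ∀ i ∈ s, IsPrimitiveOnUnitInterval ν (F i) (G i))
    (hF : ∀ i ∈ s, IntegrableOn (F i) (Icc 0 1) ν) :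
    IsPrimitiveOnUnitInterval ν (fun t => ∑ i ∈ s, c i * F i t)
      (fun x => ∑ i ∈ s, c i * G i x) := fun x hx => by
  rw [integral_finsetSum s fun i hi =>
    ((hF i hi).mono_set (Icc_subset_Icc_right hx.2)).const_mul _]
  exact Finset.sum_congr rfl fun i hi => by rw [integral_const_mul, h i hi x hx]

theorem reflect [IsFiniteMeasureOnCompacts ν] [NullSingletonClass ν]
    (hsym : IsSymmetricOnUnitInterval ν) {A B : ℝ → ℝ} {ε : ℝ}
    (hFG : IsPrimitiveOnUnitInterval ν F G) (hAB : IsPrimitiveOnUnitInterval ν A B)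
    (hF : ∀ x ∈ Icc (0:ℝ) 1, F x = A x + ε * F (1 - x))
    (hFi : IntegrableOn F (Icc 0 1) ν) (hAi : IntegrableOn A (Icc 0 1) ν) :
    ∀ x ∈ Icc (0:ℝ) 1, G x = B x + ε * (G 1 - G (1 - x)) := by
  intro x hx
  have hsub : Icc 0 x ⊆ Icc (0:ℝ) 1 := Icc_subset_Icc_right hx.2
  have hFi' := ((integrableOn_comp_one_sub hsym hFi).mono_set hsub).const_mul ε
  rw [hFG x hx, hFG 1 ⟨zero_le_one, le_rfl⟩,
    hFG (1 - x) ⟨by linarith [hx.2], by linarith [hx.1]⟩, hAB x hx,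
    setIntegral_congr_fun measurableSet_Icc fun t ht => hF t (hsub ht),
    integral_add (hAi.mono_set hsub) hFi', integral_const_mul,
    setIntegral_Icc_comp_one_sub hsym hFi hx]

end IsPrimitiveOnUnitInterval

structure IsAlternatingPrimitive (ν₁ ν₂ : Measure ℝ) (f : ℕ → ℝ → ℝ) : Prop where
  zero : ∀ x, f 0 x = 1
  odd : ∀ n, IsPrimitiveOnUnitInterval ν₁ (f (2 * n)) (f (2 * n + 1))
  even : ∀ n, IsPrimitiveOnUnitInterval ν₂ (f (2 * n + 1)) (f (2 * n + 2))

namespace IsAlternatingPrimitive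

variable {ν₁ ν₂ : Measure ℝ} [IsFiniteMeasureOnCompacts ν₁]
  [IsFiniteMeasureOnCompacts ν₂] {f : ℕ → ℝ → ℝ}

theorem monotoneOn (hf : IsAlternatingPrimitive ν₁ ν₂ f) (n : ℕ) :
    MonotoneOn (f n) (Icc 0 1) ∧ 0 ≤ f n 0 := by
  have hpair : ∀ m, (MonotoneOn (f (2 * m)) (Icc 0 1) ∧ 0 ≤ f (2 * m) 0) ∧
      (MonotoneOn (f (2 * m + 1)) (Icc 0 1) ∧ 0 ≤ f (2 * m + 1) 0) := by
    intro m
    induction m with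
    | zero =>
      have h : MonotoneOn (f 0) (Icc 0 1) ∧ 0 ≤ f 0 0 :=
        ⟨fun x _ y _ _ => by rw [hf.zero, hf.zero], by rw [hf.zero]; exact zero_le_one⟩
      exact ⟨h, (hf.odd 0).monotoneOn h.1 h.2⟩
    | succ m ih =>
      have h := (hf.even m).monotoneOn ih.2.1 ih.2.2
      exact ⟨h, (hf.odd (m + 1)).monotoneOn h.1 h.2⟩
  obtain ⟨m, rfl | rfl⟩ := Nat.even_or_odd' n
  exacts [(hpair m).1, (hpair m).2]

theorem integrableOn (hf : IsAlternatingPrimitive ν₁ ν₂ f) (ν : Measure ℝ)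
    [IsFiniteMeasureOnCompacts ν] (n : ℕ) : IntegrableOn (f n) (Icc 0 1) ν :=
  (hf.monotoneOn n).1.integrableOn_isCompact isCompact_Icc

end IsAlternatingPrimitive

def OddReflectionIdentity (p q : ℕ → ℝ → ℝ) (n : ℕ) : Prop :=
  ∀ x ∈ Set.Icc (0:ℝ) 1,
    p (2*n+1) x =
      (∑ k ∈ Finset.range (n+1), p (2*k+1) 1 * q (2*n-2*k) x)
      - (∑ k ∈ Finset.Icc 1 n, p (2*k) 1 * p (2*n-2*k+1) x)
      - p (2*n+1) (1-x)

def EvenReflectionIdentity (p q : ℕ → ℝ → ℝ) (n : ℕ) : Prop :=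
  ∀ x ∈ Set.Icc (0:ℝ) 1,
    p (2*n) x =
      (∑ k ∈ Finset.range n, p (2*k+1) 1 * q (2*n-2*k-1) x)
      - (∑ k ∈ Finset.Icc 1 n, p (2*k) 1 * p (2*n-2*k) x)
      + p (2*n) (1-x)

theorem evenReflectionIdentity_zero {p : ℕ → ℝ → ℝ} (hp : ∀ x, p 0 x = 1)
    (q : ℕ → ℝ → ℝ) :
    EvenReflectionIdentity p q 0 := fun x _ => by
  simp [hp]

section ReflectionIdentities

variable {μ : Measure ℝ} [IsFiniteMeasureOnCompacts μ] {p q : ℕ → ℝ → ℝ}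

theorem oddReflectionIdentity_of_even [NullSingletonClass μ]
    (hsym : IsSymmetricOnUnitInterval μ)
    (hp : IsAlternatingPrimitive μ volume p) (hq : IsAlternatingPrimitive volume μ q) {n : ℕ}
    (h : EvenReflectionIdentity p q n) : OddReflectionIdentity p q n := by
  have hS₁ : IsPrimitiveOnUnitInterval μ
      (fun t => ∑ k ∈ Finset.range n, p (2*k+1) 1 * q (2*n-2*k-1) t)
      (fun x => ∑ k ∈ Finset.range n, p (2*k+1) 1 * q (2*n-2*k) x) :=
    .finsetSum_const_mul _ _ (fun k hk => by
      have hkn := Finset.mem_range.1 hk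
      rw [show 2*n-2*k-1 = 2*(n-k-1)+1 by omega, show 2*n-2*k = 2*(n-k-1)+2 by omega]
      exact hq.even _) fun k _ => hq.integrableOn μ _
  have hS₂ : IsPrimitiveOnUnitInterval μ
      (fun t => ∑ k ∈ Finset.Icc 1 n, p (2*k) 1 * p (2*n-2*k) t)
      (fun x => ∑ k ∈ Finset.Icc 1 n, p (2*k) 1 * p (2*n-2*k+1) x) :=
    .finsetSum_const_mul _ _ (fun k hk => by
      rw [show 2*n-2*k = 2*(n-k) by omega]
      exact hp.odd _) fun k _ => hp.integrableOn μ _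
  have hS₁i := integrable_finsetSum (Finset.range n) fun k _ =>
    (hq.integrableOn μ (2*n-2*k-1)).const_mul (p (2*k+1) 1)
  have hS₂i := integrable_finsetSum (Finset.Icc 1 n) fun k _ =>
    (hp.integrableOn μ (2*n-2*k)).const_mul (p (2*k) 1)
  intro x hx
  have hx' := (hp.odd n).reflect hsym (hS₁.sub hS₂ hS₁i hS₂i) (ε := 1)
    (fun y hy => by rw [h y hy]; ring) (hp.integrableOn μ _) (hS₁i.sub hS₂i) x hx
  rw [Finset.sum_range_succ, Nat.sub_self, hq.zero]
  linarith

theorem evenReflectionIdentity_succ_of_odd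
    (hp : IsAlternatingPrimitive μ volume p) (hq : IsAlternatingPrimitive volume μ q) {n : ℕ}
    (h : OddReflectionIdentity p q n) : EvenReflectionIdentity p q (n + 1) := by
  have hS₁ : IsPrimitiveOnUnitInterval volume
      (fun t => ∑ k ∈ Finset.range (n+1), p (2*k+1) 1 * q (2*n-2*k) t)
      (fun x => ∑ k ∈ Finset.range (n+1), p (2*k+1) 1 * q (2*(n+1)-2*k-1) x) :=
    .finsetSum_const_mul _ _ (fun k hk => by
      have hkn := Finset.mem_range.1 hk
      rw [show 2*n-2*k = 2*(n-k) by omega, show 2*(n+1)-2*k-1 = 2*(n-k)+1 by omega]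
      exact hq.odd _) fun k _ => hq.integrableOn volume _
  have hS₂ : IsPrimitiveOnUnitInterval volume
      (fun t => ∑ k ∈ Finset.Icc 1 n, p (2*k) 1 * p (2*n-2*k+1) t)
      (fun x => ∑ k ∈ Finset.Icc 1 n, p (2*k) 1 * p (2*(n+1)-2*k) x) :=
    .finsetSum_const_mul _ _ (fun k hk => by
      have hkn := Finset.mem_Icc.1 hk
      rw [show 2*n-2*k+1 = 2*(n-k)+1 by omega, show 2*(n+1)-2*k = 2*(n-k)+2 by omega]
      exact hp.even _) fun k _ => hp.integrableOn volume _
  have hS₁i := integrable_finsetSum (Finset.range (n+1)) fun k _ =>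
    (hq.integrableOn volume (2*n-2*k)).const_mul (p (2*k+1) 1)
  have hS₂i := integrable_finsetSum (Finset.Icc 1 n) fun k _ =>
    (hp.integrableOn volume (2*n-2*k+1)).const_mul (p (2*k) 1)
  intro x hx
  have hx' := (hp.even n).reflect isSymmetricOnUnitInterval_volume
    (hS₁.sub hS₂ hS₁i hS₂i) (ε := -1) (fun y hy => by rw [h y hy]; ring)
    (hp.integrableOn volume _) (hS₁i.sub hS₂i) x hx
  rw [Finset.sum_Icc_succ_top (by omega), Nat.sub_self, hp.zero]
  rw [show 2 * (n + 1) = 2 * n + 2 by ring] at hx' ⊢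
  linarith

end ReflectionIdentities

theorem stmt_7_general
    (μ : Measure ℝ) [IsProbabilityMeasure μ] [NullSingletonClass μ]
    (p q : ℕ → ℝ → ℝ)
    (hp0 : ∀ x : ℝ, p 0 x = 1) (hq0 : ∀ x : ℝ, q 0 x = 1)
    (hpodd : ∀ (n : ℕ) (x : ℝ), p (2*n+1) x = ∫ t in Set.Icc (0:ℝ) x, p (2*n) t ∂μ)
    (hpeven : ∀ (n : ℕ) (x : ℝ), p (2*n+2) x = ∫ t in (0:ℝ)..x, p (2*n+1) t)
    (hqodd : ∀ (n : ℕ) (x : ℝ), q (2*n+1) x = ∫ t in (0:ℝ)..x, q (2*n) t)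
    (hqeven : ∀ (n : ℕ) (x : ℝ), q (2*n+2) x = ∫ t in Set.Icc (0:ℝ) x, q (2*n+1) t ∂μ)
    (hsym : ∀ x ∈ Set.Icc (0:ℝ) 1, μ (Set.Icc (0:ℝ) x) = μ (Set.Icc (1-x) 1)) :
    ∀ x ∈ Set.Icc (0:ℝ) 1,
      (∀ n : ℕ,
        p (2*n+1) x =
          (∑ k ∈ Finset.range (n+1), p (2*k+1) 1 * q (2*n-2*k) x)
          - (∑ k ∈ Finset.Icc 1 n, p (2*k) 1 * p (2*n-2*k+1) x)
          - p (2*n+1) (1-x)) ∧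
      (∀ n : ℕ, 1 ≤ n →
        p (2*n) x =
          (∑ k ∈ Finset.range n, p (2*k+1) 1 * q (2*n-2*k-1) x)
          - (∑ k ∈ Finset.Icc 1 n, p (2*k) 1 * p (2*n-2*k) x)
          + p (2*n) (1-x)) := by
  have hp : IsAlternatingPrimitive μ volume p :=
    ⟨hp0, fun n x _ => hpodd n x, fun n => isPrimitiveOnUnitInterval_volume (hpeven n)⟩
  have hq : IsAlternatingPrimitive volume μ q :=
    ⟨hq0, fun n => isPrimitiveOnUnitInterval_volume (hqodd n), fun n x _ => hqeven n x⟩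
  have hident : ∀ n, EvenReflectionIdentity p q n ∧ OddReflectionIdentity p q n := by
    intro n
    induction n with
    | zero =>
      have h := evenReflectionIdentity_zero hp0 q
      exact ⟨h, oddReflectionIdentity_of_even hsym hp hq h⟩
    | succ n ih =>
      have h := evenReflectionIdentity_succ_of_odd hp hq ih.2
      exact ⟨h, oddReflectionIdentity_of_even hsym hp hq h⟩
  exact fun x hx => ⟨fun n => (hident n).2 x hx, fun n _ => (hident n).1 x hx⟩

theorem stmt_7
    (μ : Measure ℝ) [IsProbabilityMeasure μ] [NullSingletonClass μ]
    (hsupp : μ (Set.Icc (0:ℝ) 1)ᶜ = 0)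
    (p q : ℕ → ℝ → ℝ)
    (hp0 : ∀ x : ℝ, p 0 x = 1) (hq0 : ∀ x : ℝ, q 0 x = 1)
    (hpodd : ∀ (n : ℕ) (x : ℝ), p (2*n+1) x = ∫ t in Set.Icc (0:ℝ) x, p (2*n) t ∂μ)
    (hpeven : ∀ (n : ℕ) (x : ℝ), p (2*n+2) x = ∫ t in (0:ℝ)..x, p (2*n+1) t)
    (hqodd : ∀ (n : ℕ) (x : ℝ), q (2*n+1) x = ∫ t in (0:ℝ)..x, q (2*n) t)
    (hqeven : ∀ (n : ℕ) (x : ℝ), q (2*n+2) x = ∫ t in Set.Icc (0:ℝ) x, q (2*n+1) t ∂μ)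
    (hsym : ∀ x ∈ Set.Icc (0:ℝ) 1, μ (Set.Icc (0:ℝ) x) = μ (Set.Icc (1-x) 1)) :
    ∀ x ∈ Set.Icc (0:ℝ) 1,
      (∀ n : ℕ,
        p (2*n+1) x =
          (∑ k ∈ Finset.range (n+1), p (2*k+1) 1 * q (2*n-2*k) x)
          - (∑ k ∈ Finset.Icc 1 n, p (2*k) 1 * p (2*n-2*k+1) x)
          - p (2*n+1) (1-x)) ∧
      (∀ n : ℕ, 1 ≤ n →
        p (2*n) x =
          (∑ k ∈ Finset.range n, p (2*k+1) 1 * q (2*n-2*k-1) x)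
          - (∑ k ∈ Finset.Icc 1 n, p (2*k) 1 * p (2*n-2*k) x)
          + p (2*n) (1-x)) :=
  stmt_7_general μ p q hp0 hq0 hpodd hpeven hqodd hqeven hsym
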